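/- arXiv:2107.12722 — 2 statements merged into one kernel-verified Lean document; each statement's English description precedes it below -/
import Mathlib

section
/- If κ is an uncountable regular cardinal, ν < κ ≤ λ are cardinals with μ^ν < κ for all μ < κ, and f : (ν → λ) → λ, then whenever ⟨a_i : i < δ⟩ is a ⊆-increasing sequence of elements of Cl_κ(f) with δ < κ a limit ordinal of cofinality greater than ν, the union ⋃_{i<δ} a_i belongs to Cl_κ(f). -/
open Cardinal

/-- `Cl_κ(f)`: the elements of `P_κ(λ)` (sets of size `< κ`) that are closed under `f`,
where the "cardinal" `ν` is represented by a type `V` and `λ` by a type `L`. -/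
def ClSet {V L : Type*} (κ : Cardinal) (f : (V → L) → L) : Set (Set L) :=
  {a | #a < κ ∧ ∀ s : V → L, Set.range s ⊆ a → f s ∈ a}

/-- `Cl_κ(f)` is closed under unions of `⊆`-increasing chains of limit length `δ < κ`
of cofinality greater than `ν`. -/
theorem clSet_chain_closed {V L : Type} (κ : Cardinal.{0})
    (hreg : κ.IsRegular) (hunc : ℵ₀ < κ)
    (hV : #V < κ) (hL : κ ≤ #L)
    (hpow : ∀ μ : Cardinal, μ < κ → μ ^ #V < κ)
    (f : (V → L) → L)
    (δ : Ordinal.{0}) (hδκ : δ < κ.ord) (hδ : Order.IsSuccLimit δ) (hcof : #V < δ.cof)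
    (a : Ordinal → Set L)
    (hmono : ∀ i j : Ordinal, i ≤ j → j < δ → a i ⊆ a j)
    (hmem : ∀ i : Ordinal, i < δ → a i ∈ ClSet κ f) :
    (⋃ i ∈ Set.Iio δ, a i) ∈ ClSet κ f := by
  have hδcard : δ.card < κ := (Cardinal.lt_ord.mp hδκ)
  -- reindex the union by `δ.ToType`
  have hre : (⋃ i ∈ Set.Iio δ, a i) =
      ⋃ x : δ.ToType, a ((Ordinal.ToType.mk (o := δ)).symm x : Ordinal) := by
    ext y
    simp only [Set.mem_iUnion, Set.mem_Iio, exists_prop]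
    constructor
    · rintro ⟨i, hi, hy⟩
      exact ⟨Ordinal.ToType.mk (o := δ) ⟨i, hi⟩, by simpa using hy⟩
    · rintro ⟨x, hy⟩
      exact ⟨((Ordinal.ToType.mk (o := δ)).symm x : Ordinal),
        ((Ordinal.ToType.mk (o := δ)).symm x).2, hy⟩
  constructor
  · rw [hre]
    refine lt_of_le_of_lt (Cardinal.mk_iUnion_le _) ?_
    have h1 : #δ.ToType < κ := by rwa [Cardinal.mk_toType]
    refine Cardinal.mul_lt_of_lt hreg.aleph0_le h1 ?_
    exact Cardinal.iSup_lt_of_isRegular hreg h1 fun x =>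
      (hmem _ ((Ordinal.ToType.mk (o := δ)).symm x).2).1
  · intro s hs
    have hchoice : ∀ v : V, ∃ i : Ordinal, i < δ ∧ s v ∈ a i := by
      intro v
      have : s v ∈ ⋃ i ∈ Set.Iio δ, a i := hs ⟨v, rfl⟩
      simpa only [Set.mem_iUnion, Set.mem_Iio, exists_prop] using this
    choose g hg hg' using hchoice
    have hj : (⨆ v, g v) < δ := Ordinal.iSup_lt_ord hcof hg
    have hrange : Set.range s ⊆ a (⨆ v, g v) := by
      rintro _ ⟨v, rfl⟩
      exact hmono _ _ (Ordinal.le_iSup g v) hj (hg' v)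
    have := (hmem _ hj).2 s hrange
    exact Set.mem_biUnion hj this
end

section
/- Suppose κ is an uncountable regular cardinal and ⟨A_α : α < κ⟩ is a sequence of sets with A_α ⊆ α, obtained from a function ℓ : κ → V_κ via A_α = ℓ(α) whenever ℓ(α) ⊆ α (and A_α = ∅ otherwise). Assume that for every A ⊆ κ and every club C ⊆ κ there exist an elementary embedding j : M → N with critical point κ, with ℓ, A, C ∈ M, κ ∈ j(C), and j(ℓ)(κ) = A. Then ⟨A_α : α < κ⟩ is a ◇_κ-sequence on the club filter: for every A ⊆ κ and club C ⊆ κ there is α ∈ C with A ∩ α = A_α. -/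
open Cardinal FirstOrder

universe u

/-- The first-order language of set theory: one binary relation symbol (membership). -/
def SetLang : FirstOrder.Language :=
  { Functions := fun _ => Empty
    Relations := fun n => match n with | 2 => PUnit | _ => Empty }

/-- Any set `S` of ZFC sets is a `SetLang`-structure, interpreting the relation symbol
by actual membership. -/
noncomputable instance zMemStructure (S : Set ZFSet) : SetLang.Structure S where
  funMap := fun f _ => f.elim
  RelMap := fun {n} r x =>
    match n, r, x with
    | 2, _, x => ((x 0 : ZFSet) ∈ (x 1 : ZFSet))

/-- The von Neumann ordinal (as a `ZFSet`) corresponding to an ordinal `o`. -/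
noncomputable def ordToZFSet (o : Ordinal.{0}) : ZFSet.{0} :=
  ZFSet.range fun i : Shrink.{0} (Set.Iio o) =>
    ordToZFSet ((equivShrink (Set.Iio o)).symm i).1
termination_by o
decreasing_by exact ((equivShrink (Set.Iio o)).symm i).2

/-- `C` is club (closed and unbounded) in `o`. -/
def IsClubIn (C : Set Ordinal.{0}) (o : Ordinal.{0}) : Prop :=
  (∀ α < o, ∃ β ∈ C, α ≤ β) ∧
    ∀ α < o, 0 < α → (∀ β < α, ∃ γ ∈ C, β < γ ∧ γ < α) → α ∈ C

open FirstOrder.Language in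
/-- Auxiliary: membership formula with two free variables. -/
def memFormula : SetLang.Formula (Fin 2) :=
  Relations.boundedFormula₂ (PUnit.unit : SetLang.Relations 2)
    (Term.var (Sum.inl 0)) (Term.var (Sum.inl 1))

@[simp] theorem zRelMap {S : Set ZFSet} (r : SetLang.Relations 2) (a b : S) :
    FirstOrder.Language.Structure.RelMap r ![a, b] ↔ (a : ZFSet) ∈ (b : ZFSet) := Iff.rfl

open FirstOrder.Language in
theorem realize_setRel {S : Set ZFSet} {α : Type} {n : ℕ} {v : α → S} {xs : Fin n → S}
    {t₁ t₂ : SetLang.Term (α ⊕ Fin n)} :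
    (Relations.boundedFormula₂ (PUnit.unit : SetLang.Relations 2) t₁ t₂).Realize v xs ↔
      ((t₁.realize (Sum.elim v xs) : S) : ZFSet) ∈ ((t₂.realize (Sum.elim v xs) : S) : ZFSet) :=
  BoundedFormula.realize_rel₂.trans Iff.rfl

open FirstOrder.Language in
theorem realize_memFormula {S : Set ZFSet} (v : Fin 2 → S) :
    memFormula.Realize v ↔ (v 0).1 ∈ (v 1).1 := by
  rw [memFormula]
  simp only [Formula.Realize, realize_setRel, BoundedFormula.realize_rel₂, Term.realize_var, Sum.elim_inl,
    zRelMap]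

theorem zpair_def (x y : ZFSet) : ZFSet.pair x y = {{x}, {x, y}} := rfl

theorem mem_ordToZFSet {x : ZFSet} {o : Ordinal} :
    x ∈ ordToZFSet o ↔ ∃ b < o, x = ordToZFSet b := by
  rw [ordToZFSet, ZFSet.mem_range]
  constructor
  · rintro ⟨i, rfl⟩
    exact ⟨_, ((equivShrink (Set.Iio o)).symm i).2, rfl⟩
  · rintro ⟨b, hb, rfl⟩
    exact ⟨equivShrink (Set.Iio o) ⟨b, hb⟩, by simp⟩

theorem ordToZFSet_mem {a b : Ordinal} (h : a < b) : ordToZFSet a ∈ ordToZFSet b :=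
  mem_ordToZFSet.2 ⟨a, h, rfl⟩

theorem rank_ordToZFSet (o : Ordinal) : (ordToZFSet o).rank = o := by
  induction o using Ordinal.induction with
  | h o IH =>
    apply le_antisymm
    · rw [ZFSet.rank_le_iff]
      intro y hy
      obtain ⟨b, hb, rfl⟩ := mem_ordToZFSet.1 hy
      rw [IH b hb]; exact hb
    · refine le_of_forall_lt fun b hb => ?_
      rw [← IH b hb]
      exact ZFSet.rank_lt_of_mem (ordToZFSet_mem hb)

theorem ordToZFSet_injective : Function.Injective ordToZFSet := by
  intro a b h
  by_contra hne
  rcases Ne.lt_or_gt hne with hl | hl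
  · exact (ZFSet.mem_irrefl _) (h ▸ ordToZFSet_mem hl)
  · exact (ZFSet.mem_irrefl _) (h ▸ ordToZFSet_mem hl)

theorem isOrdinal_ordToZFSet (o : Ordinal) : (ordToZFSet o).IsOrdinal := by
  constructor
  · intro y hy z hz
    obtain ⟨b, hb, rfl⟩ := mem_ordToZFSet.1 hy
    obtain ⟨c, hc, rfl⟩ := mem_ordToZFSet.1 hz
    exact ordToZFSet_mem (hc.trans hb)
  · intro y z w hyz hzw hw
    obtain ⟨b, hb, rfl⟩ := mem_ordToZFSet.1 hw
    obtain ⟨c, hc, rfl⟩ := mem_ordToZFSet.1 hzw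
    obtain ⟨d, hd, rfl⟩ := mem_ordToZFSet.1 hyz
    exact ordToZFSet_mem (hd.trans hc)

open FirstOrder.Language in
/-- The pull-back formula: there exist `x ∈ c`, `y`, and `p = ⟨x, y⟩ ∈ l` (coded via
its elements `s = {x}` and `t = {x, y}`) with `y ⊆ x` and `y ∩ x = a ∩ x`. -/
def phiBody : SetLang.BoundedFormula (Fin 3) 5 :=
  Relations.boundedFormula₂ (PUnit.unit : SetLang.Relations 2) &0 (Term.var (Sum.inl 1))
    ⊓ Relations.boundedFormula₂ (PUnit.unit : SetLang.Relations 2) &2 (Term.var (Sum.inl 2))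
    ⊓ Relations.boundedFormula₂ (PUnit.unit : SetLang.Relations 2) &3 &2
    ⊓ Relations.boundedFormula₂ (PUnit.unit : SetLang.Relations 2) &4 &2
    ⊓ Relations.boundedFormula₂ (PUnit.unit : SetLang.Relations 2) &0 &3
    ⊓ Relations.boundedFormula₂ (PUnit.unit : SetLang.Relations 2) &0 &4
    ⊓ Relations.boundedFormula₂ (PUnit.unit : SetLang.Relations 2) &1 &4
    ⊓ (Relations.boundedFormula₂ (PUnit.unit : SetLang.Relations 2) &5 &3
        ⟹ (Term.bdEqual &5 &0)).all
    ⊓ (Relations.boundedFormula₂ (PUnit.unit : SetLang.Relations 2) &5 &4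
        ⟹ ((Term.bdEqual &5 &0) ⊔ (Term.bdEqual &5 &1))).all
    ⊓ (Relations.boundedFormula₂ (PUnit.unit : SetLang.Relations 2) &5 &2
        ⟹ ((Term.bdEqual &5 &3) ⊔ (Term.bdEqual &5 &4))).all
    ⊓ (Relations.boundedFormula₂ (PUnit.unit : SetLang.Relations 2) &5 &1
        ⟹ Relations.boundedFormula₂ (PUnit.unit : SetLang.Relations 2) &5 &0).all
    ⊓ (Relations.boundedFormula₂ (PUnit.unit : SetLang.Relations 2) &5 &0
        ⟹ ((Relations.boundedFormula₂ (PUnit.unit : SetLang.Relations 2) &5 &1).iff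
            (Relations.boundedFormula₂ (PUnit.unit : SetLang.Relations 2) &5
              (Term.var (Sum.inl 0))))).all

open FirstOrder.Language in
def phi : SetLang.Formula (Fin 3) := phiBody.ex.ex.ex.ex.ex

open FirstOrder.Language in
set_option maxHeartbeats 2000000 in
theorem realize_phi {S : Set ZFSet} (v : Fin 3 → S) :
    phi.Realize v ↔ ∃ x y p s t : S,
      x.1 ∈ (v 1).1 ∧ p.1 ∈ (v 2).1 ∧ s.1 ∈ p.1 ∧ t.1 ∈ p.1 ∧ x.1 ∈ s.1 ∧ x.1 ∈ t.1
      ∧ y.1 ∈ t.1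
      ∧ (∀ u : S, u.1 ∈ s.1 → u = x)
      ∧ (∀ u : S, u.1 ∈ t.1 → u = x ∨ u = y)
      ∧ (∀ w : S, w.1 ∈ p.1 → w = s ∨ w = t)
      ∧ (∀ u : S, u.1 ∈ y.1 → u.1 ∈ x.1)
      ∧ (∀ u : S, u.1 ∈ x.1 → (u.1 ∈ y.1 ↔ u.1 ∈ (v 0).1)) := by
  rw [phi, phiBody]
  simp only [Formula.Realize, BoundedFormula.realize_ex, BoundedFormula.realize_inf,
    BoundedFormula.realize_all, BoundedFormula.realize_imp, BoundedFormula.realize_iff,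
    BoundedFormula.realize_sup, BoundedFormula.realize_bdEqual, realize_setRel, BoundedFormula.realize_rel₂,
    Term.realize_var, Sum.elim_inr, Sum.elim_inl, Function.comp_apply, zRelMap,
    Fin.snoc, Fin.castLT]
  simp (config := { decide := true }) only [Fin.isValue]
  norm_num [and_assoc, Subtype.ext_iff]

/-- If `⟨A_α : α < κ⟩` is obtained from `ℓ : κ → V_κ` by `A_α = ℓ(α)` whenever
`ℓ(α) ⊆ α` (and `A_α = ∅` otherwise), and for all `A ⊆ κ` and clubs `C ⊆ κ` there is
an elementary embedding `j : M → N` of transitive membership structures with critical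
point `κ`, with (codes for) `ℓ`, `A`, `C` in `M`, `κ ∈ j(C)` and `j(ℓ)(κ) = A`, then
`⟨A_α : α < κ⟩` is a `◇_κ`-sequence: for every `A ⊆ κ` and club `C ⊆ κ` there is
`α ∈ C` with `A ∩ α = A_α`. -/

theorem diamond_of_anticipating_embeddings
    (κ : Cardinal.{0}) (hreg : κ.IsRegular) (hunc : ℵ₀ < κ)
    (ℓ : Ordinal.{0} → ZFSet.{0}) (hℓ : ∀ α < κ.ord, (ℓ α).rank < κ.ord)
    (Aseq : Ordinal.{0} → Set Ordinal.{0})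
    (hAseq : ∀ α < κ.ord,
      ((∀ x ∈ ℓ α, ∃ β < α, x = ordToZFSet β) →
        ∀ β : Ordinal, (β ∈ Aseq α ↔ ordToZFSet β ∈ ℓ α)) ∧
      ((¬ ∀ x ∈ ℓ α, ∃ β < α, x = ordToZFSet β) → Aseq α = ∅))
    (hemb : ∀ A C : Set Ordinal.{0}, A ⊆ Set.Iio κ.ord → C ⊆ Set.Iio κ.ord →
      IsClubIn C κ.ord →
      ∃ (M N : ZFSet.{0}) (_ : M.IsTransitive) (_ : N.IsTransitive)
        (j : M.toSet ↪ₑ[SetLang] N.toSet)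
        (a c l : ZFSet) (ha : a ∈ M.toSet) (hc : c ∈ M.toSet) (hl : l ∈ M.toSet)
        (hkM : ordToZFSet κ.ord ∈ M.toSet),
        -- `a`, `c` and `l` are the codes of `A`, `C` and `ℓ ↾ κ`:
        (∀ β : Ordinal, (ordToZFSet β ∈ a ↔ β ∈ A)) ∧
        (∀ x ∈ a, ∃ β ∈ A, x = ordToZFSet β) ∧
        (∀ β : Ordinal, (ordToZFSet β ∈ c ↔ β ∈ C)) ∧
        (∀ x ∈ c, ∃ β ∈ C, x = ordToZFSet β) ∧
        (∀ x : ZFSet, x ∈ l ↔ ∃ β < κ.ord, x = ZFSet.pair (ordToZFSet β) (ℓ β)) ∧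
        -- `j` has critical point `κ`:
        (∀ (x : ZFSet) (hx : x ∈ M.toSet), x.IsOrdinal → x.rank < κ.ord →
          (j ⟨x, hx⟩).1 = x) ∧
        κ.ord < (j ⟨ordToZFSet κ.ord, hkM⟩).1.rank ∧
        -- `κ ∈ j(C)`:
        ordToZFSet κ.ord ∈ (j ⟨c, hc⟩).1 ∧
        -- `j(ℓ)(κ) = A`:
        ZFSet.pair (ordToZFSet κ.ord) a ∈ (j ⟨l, hl⟩).1) :
    ∀ A C : Set Ordinal.{0}, A ⊆ Set.Iio κ.ord → C ⊆ Set.Iio κ.ord →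
      IsClubIn C κ.ord → ∃ α ∈ C, A ∩ Set.Iio α = Aseq α := by
  intro A C hA hC hclub
  obtain ⟨M, N, hMt, hNt, j, a, c, l, ha, hc, hl, hkM, ha1, ha2, hc1, hc2, hl1, hcrit, -,
    hkC, hpairJ⟩ := hemb A C hA hC hclub
  have hjlN : (j ⟨l, hl⟩).1 ∈ N := Iff.rfl.1 (j ⟨l, hl⟩).2
  have hpairN : ZFSet.pair (ordToZFSet κ.ord) a ∈ N := hNt.mem_trans hpairJ hjlN
  have hsP : ({ordToZFSet κ.ord} : ZFSet) ∈ ZFSet.pair (ordToZFSet κ.ord) a := by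
    rw [zpair_def]; exact ZFSet.mem_pair.2 (Or.inl rfl)
  have htP : ({ordToZFSet κ.ord, a} : ZFSet) ∈ ZFSet.pair (ordToZFSet κ.ord) a := by
    rw [zpair_def]; exact ZFSet.mem_pair.2 (Or.inr rfl)
  have hsN : ({ordToZFSet κ.ord} : ZFSet) ∈ N := hNt.mem_trans hsP hpairN
  have htN : ({ordToZFSet κ.ord, a} : ZFSet) ∈ N := hNt.mem_trans htP hpairN
  have hkN : ordToZFSet κ.ord ∈ N := hNt.mem_trans (ZFSet.mem_singleton.2 rfl) hsN
  have haN : a ∈ N := hNt.mem_trans (ZFSet.mem_pair.2 (Or.inr rfl)) htN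
  let vM : Fin 3 → (M.toSet : Set ZFSet) := ![⟨a, ha⟩, ⟨c, hc⟩, ⟨l, hl⟩]
  have hreal : phi.Realize (j ∘ vM) := by
    rw [realize_phi]
    refine ⟨⟨ordToZFSet κ.ord, Iff.rfl.2 hkN⟩, ⟨a, Iff.rfl.2 haN⟩,
      ⟨ZFSet.pair (ordToZFSet κ.ord) a, Iff.rfl.2 hpairN⟩,
      ⟨{ordToZFSet κ.ord}, Iff.rfl.2 hsN⟩,
      ⟨{ordToZFSet κ.ord, a}, Iff.rfl.2 htN⟩,
      hkC, hpairJ, hsP, htP, ZFSet.mem_singleton.2 rfl, ZFSet.mem_pair.2 (Or.inl rfl),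
      ZFSet.mem_pair.2 (Or.inr rfl), ?_, ?_, ?_, ?_, ?_⟩
    · rintro ⟨u, huN⟩ hu
      exact Subtype.ext (ZFSet.mem_singleton.1 hu)
    · rintro ⟨u, huN⟩ hu
      rcases ZFSet.mem_pair.1 hu with h | h
      exacts [Or.inl (Subtype.ext h), Or.inr (Subtype.ext h)]
    · rintro ⟨w, hwN⟩ hw
      rcases ZFSet.mem_pair.1 (show w ∈ ({{ordToZFSet κ.ord}, {ordToZFSet κ.ord, a}} : ZFSet)
        from hw) with h | h
      exacts [Or.inl (Subtype.ext h), Or.inr (Subtype.ext h)]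
    · rintro ⟨u, huN⟩ hu
      obtain ⟨β, hβ, rfl⟩ := ha2 u hu
      exact ordToZFSet_mem (hA hβ)
    · rintro ⟨u, huN⟩ hu
      obtain ⟨β, hβ, rfl⟩ := mem_ordToZFSet.1 hu
      have huM : ordToZFSet β ∈ M.toSet :=
        Iff.rfl.2
          (hMt.mem_trans (ordToZFSet_mem hβ) (Iff.rfl.1 hkM))
      have hfix : (j ⟨ordToZFSet β, huM⟩).1 = ordToZFSet β :=
        hcrit _ huM (isOrdinal_ordToZFSet β) (by rw [rank_ordToZFSet]; exact hβ)
      have h2 : (j ⟨ordToZFSet β, huM⟩).1 ∈ (j ⟨a, ha⟩).1 ↔ ordToZFSet β ∈ a := by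
        have h3 := j.map_formula memFormula ![⟨ordToZFSet β, huM⟩, ⟨a, ha⟩]
        rw [realize_memFormula, realize_memFormula] at h3
        exact h3
      rw [hfix] at h2
      exact h2.symm
  have hrealM : phi.Realize vM := (j.map_formula phi vM).1 hreal
  rw [realize_phi] at hrealM
  obtain ⟨x, y, p, s, t, hxc, hpl, hsp, htp, hxs, hxt, hyt, hsx, htxy, hpst, hyx, hiff⟩ :=
    hrealM
  obtain ⟨α, hαC, hxα⟩ := hc2 x.1 hxc
  obtain ⟨β, hβκ, hpβ⟩ := (hl1 p.1).1 hpl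
  have memM : ∀ (z : (M.toSet : Set ZFSet)) (w : ZFSet), w ∈ z.1 → w ∈ M.toSet :=
    fun z w hw =>
      Iff.rfl.2 (hMt.mem_trans hw (Iff.rfl.1 z.2))
  have hs1 : s.1 = {x.1} := by
    apply ZFSet.ext; intro w
    constructor
    · intro hw
      rw [ZFSet.mem_singleton]
      exact congrArg Subtype.val (hsx ⟨w, memM s w hw⟩ hw)
    · intro hw
      rw [ZFSet.mem_singleton] at hw
      subst hw; exact hxs
  have ht1 : t.1 = {x.1, y.1} := by
    apply ZFSet.ext; intro w
    constructor
    · intro hw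
      rw [ZFSet.mem_pair]
      rcases htxy ⟨w, memM t w hw⟩ hw with h | h
      exacts [Or.inl (congrArg Subtype.val h), Or.inr (congrArg Subtype.val h)]
    · intro hw
      rcases ZFSet.mem_pair.1 hw with h | h <;> subst h
      exacts [hxt, hyt]
  have hp1 : p.1 = ZFSet.pair x.1 y.1 := by
    rw [zpair_def]
    apply ZFSet.ext; intro w
    constructor
    · intro hw
      rw [ZFSet.mem_pair]
      rcases hpst ⟨w, memM p w hw⟩ hw with h | h
      · exact Or.inl (by rw [← hs1]; exact congrArg Subtype.val h)
      · exact Or.inr (by rw [← ht1]; exact congrArg Subtype.val h)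
    · intro hw
      rcases ZFSet.mem_pair.1 hw with h | h <;> subst h
      exacts [hs1 ▸ hsp, ht1 ▸ htp]
  obtain ⟨h1, h2⟩ := ZFSet.pair_injective (hp1.symm.trans hpβ)
  have hαβ : α = β := ordToZFSet_injective (hxα.symm.trans h1)
  have hαlt : α < κ.ord := hαβ ▸ hβκ
  have hy2 : y.1 = ℓ α := by rw [h2, hαβ]
  have hsub : ∀ z ∈ ℓ α, ∃ γ < α, z = ordToZFSet γ := by
    intro z hz
    have hzy : z ∈ y.1 := hy2 ▸ hz
    have hzx : z ∈ x.1 := hyx ⟨z, memM y z hzy⟩ hzy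
    rw [hxα] at hzx
    exact mem_ordToZFSet.1 hzx
  have hAs := (hAseq α hαlt).1 hsub
  refine ⟨α, hαC, ?_⟩
  ext γ
  simp only [Set.mem_inter_iff, Set.mem_Iio]
  constructor
  · rintro ⟨hγA, hγα⟩
    have hm : ordToZFSet γ ∈ x.1 := by rw [hxα]; exact ordToZFSet_mem hγα
    have hmem : ordToZFSet γ ∈ y.1 :=
      (hiff ⟨ordToZFSet γ, memM x _ hm⟩ hm).2 ((ha1 γ).2 hγA)
    rw [hAs γ, ← hy2]
    exact hmem
  · intro hγ
    have hzy : ordToZFSet γ ∈ y.1 := hy2 ▸ (hAs γ).1 hγ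
    have hmM := memM y _ hzy
    have hzx : ordToZFSet γ ∈ x.1 := hyx ⟨_, hmM⟩ hzy
    have hγα : γ < α := by
      rw [hxα] at hzx
      obtain ⟨b, hb, he⟩ := mem_ordToZFSet.1 hzx
      rw [ordToZFSet_injective he]
      exact hb
    have hγA : γ ∈ A := (ha1 γ).1 ((hiff ⟨_, hmM⟩ hzx).1 hzy)
    exact ⟨hγA, hγα⟩
end
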